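/- arXiv:1304.5774 — 7 statements merged into one kernel-verified Lean document; each statement's English description precedes it below -/
import Mathlib

section
/- The probability that the random 2-letter automaton with n states is not weakly connected is Ω(1/n); that is, there exist a constant c > 0 and N such that for all n ≥ N this probability is at least c/n. -/
/-- Probability of the event `P` under the uniform measure on a finite type. -/
noncomputable def probOf (T : Type) [Fintype T] (P : T → Prop) : ℝ :=
  (Nat.card {x : T // P x} : ℝ) / (Nat.card T : ℝ)

/-- The two letters of a random 2-letter automaton acting on `Fin n`. -/
def delta2 {n : ℕ} (f : (Fin n → Fin n) × (Fin n → Fin n)) : Bool → Fin n → Fin n :=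
  fun x => if x then f.1 else f.2

/-- A DFA is weakly connected if the undirected graph on `Q` having an edge
between `q` and `q·x` for every state `q` and letter `x` is connected. -/
def WeaklyConnected {Q A : Type*} (δ : A → Q → Q) : Prop :=
  (SimpleGraph.fromRel (fun p q : Q => ∃ x : A, δ x p = q)).Connected

/-!
A state `q` fixed by both letters and hit by no other state is an isolated vertex of the
underlying graph. Requiring in addition that `q` be the only fixed point of the first letter
makes these events disjoint for different `q`, and each has probability
`n⁻² (1 - 2/n)^(n-1) (1 - 1/n)^(n-1) ≥ e⁻⁶ / n²` by `1 - x ≥ e^(-2x)` for `x ≤ 1/2`; summing over the `n` choices of `q` gives `e⁻⁶ / n`.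
-/

open Finset

theorem not_weaklyConnected_of_isolated {Q A : Type*} [Nontrivial Q] {δ : A → Q → Q} {q : Q}
    (hfix : ∀ x, δ x q = q) (hin : ∀ x p, δ x p = q → p = q) : ¬ WeaklyConnected δ := by
  intro hcon
  obtain ⟨p, hadj⟩ := hcon.preconnected.exists_adj_of_nontrivial q
  obtain ⟨hne, ⟨x, hx⟩ | ⟨x, hx⟩⟩ := SimpleGraph.fromRel_adj _ _ _ |>.1 hadj
  · exact hne ((hfix x).symm.trans hx)
  · exact hne (hin x p hx).symm

theorem exp_neg_two_mul_le_one_sub {x : ℝ} (h0 : 0 ≤ x) (h1 : x ≤ 1 / 2) :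
    Real.exp (-(2 * x)) ≤ 1 - x := by
  have hpos : 0 < 1 + 2 * x := by linarith
  calc Real.exp (-(2 * x)) = (Real.exp (2 * x))⁻¹ := Real.exp_neg _
    _ ≤ (1 + 2 * x)⁻¹ := by gcongr; linarith [Real.add_one_le_exp (2 * x)]
    _ ≤ 1 - x := by rw [inv_le_iff_one_le_mul₀ hpos]; nlinarith

theorem exp_neg_two_mul_le_one_sub_div_pow {t x : ℝ} {m : ℕ} (ht : 0 ≤ t) (hx : 0 < x)
    (htx : 2 * t ≤ x) (hmx : m ≤ x) :
    Real.exp (-(2 * t)) ≤ (1 - t / x) ^ m := by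
  calc Real.exp (-(2 * t)) ≤ Real.exp (-(2 * (t / x)) * m) := by
        rw [Real.exp_le_exp, neg_mul, neg_le_neg_iff, mul_assoc, div_mul_eq_mul_div]
        gcongr
        rw [div_le_iff₀ hx]; gcongr
    _ = Real.exp (-(2 * (t / x))) ^ m := by rw [← Real.exp_nat_mul, mul_comm]
    _ ≤ (1 - t / x) ^ m := by
        gcongr
        exact exp_neg_two_mul_le_one_sub (by positivity) (by rw [div_le_iff₀ hx]; linarith)

theorem exp_neg_six_div_le {n : ℕ} (hn : 4 ≤ n) :
    Real.exp (-6) / n ≤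
      ((n * ((n - 2) ^ (n - 1) * (n - 1) ^ (n - 1)) : ℕ) : ℝ) / ((n ^ n * n ^ n : ℕ) : ℝ) := by
  have hn' : (4 : ℝ) ≤ n := by exact_mod_cast hn
  have hpos : (0 : ℝ) < n := by linarith
  have hm : ((n - 1 : ℕ) : ℝ) ≤ n := by exact_mod_cast n.sub_le 1
  have h2 : Real.exp (-4) ≤ (1 - 2 / n) ^ (n - 1) := by
    convert exp_neg_two_mul_le_one_sub_div_pow (t := 2) (by norm_num) hpos (by linarith) hm
      using 2; norm_num
  have h1 : Real.exp (-2) ≤ (1 - 1 / n) ^ (n - 1) := by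
    convert exp_neg_two_mul_le_one_sub_div_pow (t := 1) (by norm_num) hpos (by linarith) hm
      using 2; norm_num
  have hratio : ((n * ((n - 2) ^ (n - 1) * (n - 1) ^ (n - 1)) : ℕ) : ℝ) / ((n ^ n * n ^ n : ℕ) : ℝ)
      = (1 - 2 / n) ^ (n - 1) * (1 - 1 / n) ^ (n - 1) / n := by
    have hsucc : (n : ℝ) ^ n = n ^ (n - 1) * n := by rw [← pow_succ, Nat.sub_add_cancel (by omega)]
    push_cast [Nat.cast_sub (show 2 ≤ n by omega), Nat.cast_sub (show 1 ≤ n by omega)]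
    rw [hsucc, one_sub_div hpos.ne', one_sub_div hpos.ne', div_pow, div_pow]
    field_simp
  calc Real.exp (-6) / n = Real.exp (-4) * Real.exp (-2) / n := by rw [← Real.exp_add]; norm_num
    _ ≤ (1 - 2 / n) ^ (n - 1) * (1 - 1 / n) ^ (n - 1) / n := by
        gcongr
        exact (Real.exp_pos _).le.trans h2
    _ = _ := hratio.symm

section IsolatedPairs

variable {α : Type*} [Fintype α] [DecidableEq α]

/-- `q` is fixed by `a` and `b` and has no other preimage, and `a` has no other fixed point. -/
def isolatedPairs (q : α) : Finset ((α → α) × (α → α)) :=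
  Fintype.piFinset (fun r => if r = q then {q} else {q, r}ᶜ) ×ˢ
    Fintype.piFinset (fun r => if r = q then {q} else {q}ᶜ)

theorem prod_ite_eq_pow (q : α) (m : ℕ) :
    ∏ r, (if r = q then 1 else m) = m ^ (Fintype.card α - 1) := by
  simp [prod_ite, filter_ne']

theorem card_isolatedPairs (q : α) :
    #(isolatedPairs q) =
      (Fintype.card α - 2) ^ (Fintype.card α - 1) * (Fintype.card α - 1) ^ (Fintype.card α - 1) := by
  rw [isolatedPairs, card_product, Fintype.card_piFinset, Fintype.card_piFinset,
    ← prod_ite_eq_pow q, ← prod_ite_eq_pow q]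
  congr 1 <;> refine prod_congr rfl fun r _ => ?_ <;> split_ifs with h
  · rfl
  · rw [card_compl, card_pair (Ne.symm h)]
  · rfl
  · rw [card_compl, card_singleton]

theorem pairwiseDisjoint_isolatedPairs :
    (Set.univ : Set α).PairwiseDisjoint isolatedPairs := by
  intro q _ q' _ hne
  refine disjoint_left.2 fun f hf hf' => ?_
  have hq := (Fintype.mem_piFinset.1 (mem_product.1 hf).1) q'
  have hq' := (Fintype.mem_piFinset.1 (mem_product.1 hf').1) q'
  simp only [hne.symm, if_false, if_true, mem_compl, mem_insert, mem_singleton] at hq hq'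
  exact hq (Or.inr hq')

theorem card_biUnion_isolatedPairs :
    #((univ : Finset α).biUnion isolatedPairs) =
      Fintype.card α *
        ((Fintype.card α - 2) ^ (Fintype.card α - 1) * (Fintype.card α - 1) ^ (Fintype.card α - 1)) := by
  rw [card_biUnion (by rw [coe_univ]; exact pairwiseDisjoint_isolatedPairs)]
  simp [card_isolatedPairs]

end IsolatedPairs

theorem not_weaklyConnected_of_mem_isolatedPairs {n : ℕ} (hn : 2 ≤ n) {q : Fin n}
    {f : (Fin n → Fin n) × (Fin n → Fin n)} (hf : f ∈ isolatedPairs q) :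
    ¬ WeaklyConnected (delta2 f) := by
  have : Nontrivial (Fin n) := Fin.nontrivial_iff_two_le.2 hn
  obtain ⟨ha, hb⟩ := mem_product.1 hf
  rw [Fintype.mem_piFinset] at ha hb
  refine not_weaklyConnected_of_isolated (q := q) (fun x => ?_) (fun x p hp => ?_)
  · cases x
    · simpa [delta2] using hb q
    · simpa [delta2] using ha q
  · by_contra hpq
    have hap := ha p
    have hbp := hb p
    cases x <;> simp_all [delta2]

/-- The probability that the random 2-letter automaton with `n` states is not
weakly connected is `Ω(1/n)`. -/
theorem stmt2 :
    ∃ (c : ℝ) (N : ℕ), 0 < c ∧ ∀ n : ℕ, N ≤ n →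
      c / n ≤
        probOf ((Fin n → Fin n) × (Fin n → Fin n))
          (fun f => ¬ WeaklyConnected (delta2 f)) := by
  classical
  refine ⟨Real.exp (-6), 4, Real.exp_pos _, fun n hn => (exp_neg_six_div_le hn).trans ?_⟩
  have hsub : (univ : Finset (Fin n)).biUnion isolatedPairs ⊆
      univ.filter fun f => ¬ WeaklyConnected (delta2 f) := fun f hf =>
    let ⟨_, _, hq⟩ := mem_biUnion.1 hf
    mem_filter.2 ⟨mem_univ f, not_weaklyConnected_of_mem_isolatedPairs (by omega) hq⟩
  have hcount := card_biUnion_isolatedPairs (α := Fin n) ▸ card_le_card hsub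
  rw [probOf, Nat.card_eq_fintype_card, Nat.card_eq_fintype_card, Fintype.card_subtype]
  simp only [Fintype.card_prod, Fintype.card_fun, Fintype.card_fin] at hcount ⊢
  gcongr
end

section
/- Let f : Fin n → Fin n be drawn from the uniform measure, and let c(f) be the number of cycles of its functional digraph, i.e., the number of orbits of f on its cyclic states (equivalently, the number of clusters of f). Then the probability that c(f) > 5·ln n is o(1/n⁴); that is, n⁴ · P(c(f) > 5·ln n) → 0 as n → ∞. -/
/-- The cluster (weakly connected component) equivalence of the functional
digraph of `f`: the equivalence relation generated by `s ~ f s`. -/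
def sameCluster {Q : Type*} (f : Q → Q) : Q → Q → Prop :=
  Relation.EqvGen (fun s t => f s = t)

/-- The number of clusters (weakly connected components of the functional
digraph) of `f`; this equals the number of cycles of `f`. -/
noncomputable def numClusters {Q : Type*} (f : Q → Q) : ℕ :=
  Nat.card (Quotient (⟨sameCluster f, Relation.EqvGen.is_equivalence _⟩ : Setoid Q))

/-!
Every cluster of `f` contains exactly one cycle, so summing `1 / minimalPeriod` over the periodic
points of a cluster gives `1`, and the falling factorial `(c f)_j` is the sum of
`∏ i, 1 / minimalPeriod (x i)` over `j`-tuples `x` of periodic points in distinct clusters.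
A pair `(f, x)` with prescribed periods `ℓ` is determined by the injective listing of the `j`
cycles (at most `n.descFactorial m` choices, `m = ∑ ℓ i`) together with `f` off these cycles
(`n ^ (n - m)` choices); summing `∏ i, 1 / ℓ i` over `ℓ ∈ [1, n] ^ j` then bounds the `j`-th
factorial moment of `c` by `H_n ^ j`. Hence
`E[5 ^ c] = ∑ₖ 4 ^ k E[(c)_k] / k! ≤ exp (4 H_n) ≤ e⁴ n⁴`, and Markov's inequality gives
`n⁴ P(c > 5 log n) ≤ e⁴ n ^ (8 - 5 log 5) → 0`, because `5 log 5 > 8`.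
-/

open Function Finset Filter Topology Real

lemma Nat.descFactorial_mul_pow_sub_le (n m : ℕ) : n.descFactorial m * n ^ (n - m) ≤ n ^ n := by
  rcases le_or_gt m n with h | h
  · calc n.descFactorial m * n ^ (n - m) ≤ n ^ m * n ^ (n - m) :=
          Nat.mul_le_mul_right _ (Nat.descFactorial_le_pow n m)
      _ = n ^ n := by rw [← pow_add, Nat.add_sub_cancel' h]
  · simp [Nat.descFactorial_eq_zero_iff_lt.2 h]

lemma card_filter_injective (α β : Type*) [Fintype α] [Fintype β] [DecidableEq α]
    [DecidableEq β] [DecidablePred (Injective : (α → β) → Prop)] :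
    #(univ.filter (Injective : (α → β) → Prop)) =
      (Fintype.card β).descFactorial (Fintype.card α) := by
  rw [← Fintype.card_subtype, Fintype.card_congr (Equiv.subtypeInjectiveEquivEmbedding α β),
    Fintype.card_embedding_eq]

lemma one_add_pow_eq_sum_descFactorial {c N : ℕ} (h : c ≤ N) (t : ℝ) :
    (1 + t) ^ c = ∑ k ∈ range (N + 1), t ^ k * c.descFactorial k / k.factorial := by
  rw [add_comm, add_pow, sum_subset (range_subset_range.2 (Nat.succ_le_succ h))]
  · refine sum_congr rfl fun k _ => ?_
    rw [one_pow, mul_one, Nat.descFactorial_eq_factorial_mul_choose]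
    push_cast
    field_simp
  · intro k _ hk
    rw [Nat.choose_eq_zero_of_lt (by simpa using hk)]
    simp

section Clusters

variable {Q : Type*} (f : Q → Q)

abbrev clusterSetoid : Setoid Q := ⟨sameCluster f, Relation.EqvGen.is_equivalence _⟩

lemma sameCluster_iterate_right (x : Q) (a : ℕ) : sameCluster f x (f^[a] x) := by
  induction a with
  | zero => exact Relation.EqvGen.refl x
  | succ a ih =>
    exact Relation.EqvGen.trans _ _ _ ih
      (Relation.EqvGen.rel _ _ (iterate_succ_apply' f a x).symm)

lemma sameCluster_iff_exists_iterate_eq {x y : Q} :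
    sameCluster f x y ↔ ∃ a b, f^[a] x = f^[b] y := by
  constructor
  · intro h
    induction h with
    | rel s t hst => exact ⟨1, 0, hst⟩
    | refl s => exact ⟨0, 0, rfl⟩
    | symm s t _ ih =>
      obtain ⟨a, b, h⟩ := ih
      exact ⟨b, a, h.symm⟩
    | trans s t u _ _ ih₁ ih₂ =>
      obtain ⟨a, b, h₁⟩ := ih₁
      obtain ⟨c, d, h₂⟩ := ih₂
      refine ⟨c + a, b + d, ?_⟩
      rw [iterate_add_apply, h₁, ← iterate_add_apply, add_comm c b, iterate_add_apply, h₂,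
        ← iterate_add_apply]
  · rintro ⟨a, b, h⟩
    exact Relation.EqvGen.trans _ _ _ (sameCluster_iterate_right f x a)
      (h ▸ Relation.EqvGen.symm _ _ (sameCluster_iterate_right f y b))

lemma exists_iterate_eq_of_sameCluster {x y : Q} (hy : y ∈ periodicPts f)
    (h : sameCluster f x y) : ∃ t, f^[t] x = y := by
  obtain ⟨a, b, hab⟩ := (sameCluster_iff_exists_iterate_eq f).1 h
  obtain ⟨p, hp, hyp⟩ := mem_periodicPts.1 hy
  -- `b * p - b` more steps take `f^[a] x = f^[b] y` to `f^[b * p] y = y`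
  refine ⟨b * p - b + a, ?_⟩
  rw [iterate_add_apply, hab, ← iterate_add_apply,
    Nat.sub_add_cancel (Nat.le_mul_of_pos_right b hp)]
  exact hyp.const_mul b

lemma exists_mem_periodicPts_sameCluster [Finite Q] (x : Q) :
    ∃ y ∈ periodicPts f, sameCluster f x y := by
  obtain ⟨a, b, hab, hne⟩ := not_injective_iff.1 (not_injective_infinite_finite (f^[·] x))
  wlog hlt : a < b generalizing a b
  · exact this b a hab.symm hne.symm (by omega)
  refine ⟨f^[a] x, mk_mem_periodicPts (Nat.sub_pos_of_lt hlt) ?_,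
    sameCluster_iterate_right f x a⟩
  change f^[b - a] (f^[a] x) = f^[a] x
  rw [← iterate_add_apply, Nat.sub_add_cancel hlt.le]
  exact hab.symm

variable [Fintype Q]

lemma numClusters_le_card : numClusters f ≤ Fintype.card Q :=
  (Nat.card_le_card_of_surjective _ Quotient.mk''_surjective).trans_eq Nat.card_eq_fintype_card

open scoped Classical

noncomputable def clusterCycle (κ : Quotient (clusterSetoid f)) : Finset Q :=
  univ.filter fun y => y ∈ periodicPts f ∧ Quotient.mk _ y = κ

lemma clusterCycle_mk {x : Q} (hx : x ∈ periodicPts f) :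
    clusterCycle f (Quotient.mk _ x) = (range (minimalPeriod f x)).image (f^[·] x) := by
  ext y
  simp only [clusterCycle, mem_filter, mem_univ, true_and, mem_image, mem_range, Quotient.eq]
  constructor
  · rintro ⟨hy, hyx⟩
    obtain ⟨t, rfl⟩ := exists_iterate_eq_of_sameCluster f hy (Relation.EqvGen.symm _ _ hyx)
    exact ⟨t % minimalPeriod f x, Nat.mod_lt _ (minimalPeriod_pos_of_mem_periodicPts hx),
      iterate_mod_minimalPeriod_eq⟩
  · rintro ⟨t, -, rfl⟩
    exact ⟨mk_mem_periodicPts (minimalPeriod_pos_of_mem_periodicPts hx)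
      ((isPeriodicPt_minimalPeriod f x).apply_iterate t),
      Relation.EqvGen.symm _ _ (sameCluster_iterate_right f x t)⟩

lemma sum_clusterCycle_inv_minimalPeriod (κ : Quotient (clusterSetoid f)) :
    ∑ y ∈ clusterCycle f κ, (minimalPeriod f y : ℝ)⁻¹ = 1 := by
  obtain ⟨x, hx, hκx⟩ := exists_mem_periodicPts_sameCluster f κ.out
  obtain rfl : Quotient.mk _ x = κ := (Quotient.sound hκx).symm.trans κ.out_eq
  rw [clusterCycle_mk f hx, sum_image fun a ha b hb hab =>
    iterate_injOn_Iio_minimalPeriod (by simpa using ha) (by simpa using hb) hab]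
  simp [minimalPeriod_apply_iterate hx, (minimalPeriod_pos_of_mem_periodicPts hx).ne']

noncomputable def cycleTuples (j : ℕ) : Finset (Fin j → Q) :=
  univ.filter fun x =>
    (∀ i, x i ∈ periodicPts f) ∧ Injective fun i => Quotient.mk (clusterSetoid f) (x i)

lemma mem_cycleTuples {j : ℕ} {x : Fin j → Q} :
    x ∈ cycleTuples f j ↔ (∀ i, x i ∈ periodicPts f) ∧
      Injective fun i => Quotient.mk (clusterSetoid f) (x i) := by
  simp [cycleTuples]

lemma sum_cycleTuples_prod_inv_minimalPeriod (j : ℕ) :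
    ∑ x ∈ cycleTuples f j, ∏ i, (minimalPeriod f (x i) : ℝ)⁻¹ =
      (numClusters f).descFactorial j := by
  set K := Quotient (clusterSetoid f)
  have hmaps : ∀ x ∈ cycleTuples f j, (fun i => Quotient.mk (clusterSetoid f) (x i)) ∈
      univ.filter (Injective : (Fin j → K) → Prop) := fun x hx =>
    mem_filter.2 ⟨mem_univ _, ((mem_cycleTuples f).1 hx).2⟩
  have hfiber : ∀ φ ∈ univ.filter (Injective : (Fin j → K) → Prop),
      (cycleTuples f j).filter (fun x => (fun i => Quotient.mk (clusterSetoid f) (x i)) = φ) =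
        Fintype.piFinset fun i => clusterCycle f (φ i) := by
    intro φ hφ
    ext x
    simp only [cycleTuples, clusterCycle, mem_filter, mem_univ, true_and, Fintype.mem_piFinset,
      funext_iff]
    constructor
    · rintro ⟨⟨hx, -⟩, hxφ⟩ i
      exact ⟨hx i, hxφ i⟩
    · intro hx
      refine ⟨⟨fun i => (hx i).1, ?_⟩, fun i => (hx i).2⟩
      intro i i' h
      exact (mem_filter.1 hφ).2 (((hx i).2.symm.trans h).trans (hx i').2)
  have hone : ∀ φ ∈ univ.filter (Injective : (Fin j → K) → Prop),
      ∑ x ∈ (cycleTuples f j).filter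
          (fun x => (fun i => Quotient.mk (clusterSetoid f) (x i)) = φ),
        ∏ i, (minimalPeriod f (x i) : ℝ)⁻¹ = 1 := by
    intro φ hφ
    rw [hfiber φ hφ, ← prod_univ_sum (fun i => clusterCycle f (φ i))
      (fun _ y => (minimalPeriod f y : ℝ)⁻¹)]
    simp only [sum_clusterCycle_inv_minimalPeriod, prod_const_one]
  rw [← sum_fiberwise_of_maps_to hmaps, sum_congr rfl hone, sum_const, nsmul_one,
    card_filter_injective, Fintype.card_fin, numClusters, Nat.card_eq_fintype_card]

end Clusters

section Counting

noncomputable def cyclePairs (Q : Type*) [Fintype Q] [DecidableEq Q] (j : ℕ) :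
    Finset ((Q → Q) × (Fin j → Q)) :=
  univ.filter fun p => p.2 ∈ cycleTuples p.1 j

noncomputable def cyclePairsWithPeriods (Q : Type*) [Fintype Q] [DecidableEq Q] {j : ℕ}
    (ℓ : Fin j → ℕ) : Finset ((Q → Q) × (Fin j → Q)) :=
  (cyclePairs Q j).filter fun p => (fun i => minimalPeriod p.1 (p.2 i)) = ℓ

variable {Q : Type*} {j : ℕ} (ℓ : Fin j → ℕ)

def orbitList (f : Q → Q) (x : Fin j → Q) : (Σ i, Fin (ℓ i)) → Q :=
  fun q => f^[q.2] (x q.1)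

def orbitSucc (q : Σ i, Fin (ℓ i)) : Σ i, Fin (ℓ i) :=
  ⟨q.1, ⟨(q.2 + 1) % ℓ q.1, Nat.mod_lt _ q.2.pos⟩⟩

variable {ℓ}

lemma apply_orbitList {f : Q → Q} {x : Fin j → Q} (hℓ : ∀ i, minimalPeriod f (x i) = ℓ i)
    (q : Σ i, Fin (ℓ i)) : f (orbitList ℓ f x q) = orbitList ℓ f x (orbitSucc ℓ q) := by
  change f (f^[q.2] (x q.1)) = f^[(q.2 + 1) % ℓ q.1] (x q.1)
  have hmod := iterate_mod_minimalPeriod_eq (f := f) (x := x q.1) (n := q.2 + 1)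
  rw [hℓ] at hmod
  rw [hmod, iterate_succ_apply']

variable [Fintype Q] [DecidableEq Q]

lemma mem_cyclePairsWithPeriods {p : (Q → Q) × (Fin j → Q)} :
    p ∈ cyclePairsWithPeriods Q ℓ ↔
      p.2 ∈ cycleTuples p.1 j ∧ ∀ i, minimalPeriod p.1 (p.2 i) = ℓ i := by
  simp [cyclePairsWithPeriods, cyclePairs, funext_iff]

lemma orbitList_injective {p : (Q → Q) × (Fin j → Q)}
    (hp : p ∈ cyclePairsWithPeriods Q ℓ) : Injective (orbitList ℓ p.1 p.2) := by
  obtain ⟨hx, hℓ⟩ := mem_cyclePairsWithPeriods.1 hp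
  rw [mem_cycleTuples] at hx
  rintro ⟨i, t⟩ ⟨i', t'⟩ h
  obtain rfl : i = i' :=
    hx.2 (Quotient.sound ((sameCluster_iff_exists_iterate_eq p.1).2 ⟨t, t', h⟩))
  have htt' : (t : ℕ) = t' :=
    iterate_injOn_Iio_minimalPeriod (by simp [hℓ]) (by simp [hℓ]) h
  rw [Fin.ext htt']

lemma eq_of_orbitList_eq {p q : (Q → Q) × (Fin j → Q)} (hp : p ∈ cyclePairsWithPeriods Q ℓ)
    (hq : q ∈ cyclePairsWithPeriods Q ℓ) (h : orbitList ℓ p.1 p.2 = orbitList ℓ q.1 q.2)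
    (hoff : ∀ y ∉ Set.range (orbitList ℓ p.1 p.2), p.1 y = q.1 y) : p = q := by
  obtain ⟨f, x⟩ := p
  obtain ⟨g, y⟩ := q
  obtain ⟨hx, hfℓ⟩ := mem_cyclePairsWithPeriods.1 hp
  obtain ⟨-, hgℓ⟩ := mem_cyclePairsWithPeriods.1 hq
  rw [mem_cycleTuples] at hx
  have hpos (i : Fin j) : 0 < ℓ i := hfℓ i ▸ minimalPeriod_pos_of_mem_periodicPts (hx.1 i)
  obtain rfl : x = y := funext fun i => congrFun h ⟨i, ⟨0, hpos i⟩⟩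
  refine Prod.ext (funext fun z => ?_) rfl
  by_cases hz : z ∈ Set.range (orbitList ℓ f x)
  · obtain ⟨r, rfl⟩ := hz
    rw [apply_orbitList hfℓ, h, apply_orbitList hgℓ]
  · exact hoff z hz

lemma card_filter_orbitList_eq_le {E : (Σ i, Fin (ℓ i)) → Q} (hE : Injective E) :
    #((cyclePairsWithPeriods Q ℓ).filter fun p => orbitList ℓ p.1 p.2 = E) ≤
      Fintype.card Q ^ (Fintype.card Q - ∑ i, ℓ i) := by
  set S : Finset Q := (univ.image E)ᶜ
  have hS : #S = Fintype.card Q - ∑ i, ℓ i := by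
    simp [S, card_compl, card_image_of_injective _ hE]
  calc _ ≤ #(univ : Finset (S → Q)) := card_le_card_of_injOn (fun p y => p.1 y)
          (fun _ _ => mem_coe.2 (mem_univ _)) ?_
    _ = _ := by simp [hS]
  intro p hp q hq hpq
  obtain ⟨hp, hpE⟩ := mem_filter.1 hp
  obtain ⟨hq, hqE⟩ := mem_filter.1 hq
  refine eq_of_orbitList_eq hp hq (hpE.trans hqE.symm) fun y hy => congrFun hpq ⟨y, ?_⟩
  simpa [S, hpE] using hy

lemma card_cyclePairsWithPeriods_le :
    #(cyclePairsWithPeriods Q ℓ) ≤ Fintype.card Q ^ Fintype.card Q := by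
  set n := Fintype.card Q
  set m := ∑ i, ℓ i
  have hmaps : ∀ p ∈ cyclePairsWithPeriods Q ℓ,
      orbitList ℓ p.1 p.2 ∈ univ.filter (Injective : ((Σ i, Fin (ℓ i)) → Q) → Prop) :=
    fun p hp => mem_filter.2 ⟨mem_univ _, orbitList_injective hp⟩
  calc #(cyclePairsWithPeriods Q ℓ)
      = ∑ E ∈ univ.filter Injective,
          #((cyclePairsWithPeriods Q ℓ).filter fun p => orbitList ℓ p.1 p.2 = E) :=
        card_eq_sum_card_fiberwise hmaps
    _ ≤ ∑ E ∈ univ.filter (Injective : ((Σ i, Fin (ℓ i)) → Q) → Prop), n ^ (n - m) :=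
        sum_le_sum fun E hE => card_filter_orbitList_eq_le (mem_filter.1 hE).2
    _ = n.descFactorial m * n ^ (n - m) := by
        rw [sum_const, smul_eq_mul, card_filter_injective]
        simp [n, m]
    _ ≤ n ^ n := Nat.descFactorial_mul_pow_sub_le n m

end Counting

section Moments

variable (Q : Type*) [Fintype Q] [DecidableEq Q]

lemma sum_cyclePairs_prod_inv_minimalPeriod (j : ℕ) :
    ∑ p ∈ cyclePairs Q j, ∏ i, (minimalPeriod p.1 (p.2 i) : ℝ)⁻¹ =
      ∑ f : Q → Q, ((numClusters f).descFactorial j : ℝ) := by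
  rw [cyclePairs, sum_filter, Fintype.sum_prod_type]
  exact sum_congr rfl fun f _ => by
    rw [← sum_cycleTuples_prod_inv_minimalPeriod, ← sum_filter]
    simp

theorem sum_descFactorial_numClusters_le (j : ℕ) :
    ∑ f : Q → Q, ((numClusters f).descFactorial j : ℝ) ≤
      (Fintype.card Q : ℝ) ^ Fintype.card Q * (harmonic (Fintype.card Q) : ℝ) ^ j := by
  set n := Fintype.card Q
  have hmaps : ∀ p ∈ cyclePairs Q j,
      (fun i => minimalPeriod p.1 (p.2 i)) ∈ Fintype.piFinset fun _ : Fin j => Icc 1 n := by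
    intro p hp
    simp only [cyclePairs, mem_filter, mem_univ, true_and, mem_cycleTuples] at hp
    simpa [Fintype.mem_piFinset] using fun i =>
      ⟨minimalPeriod_pos_of_mem_periodicPts (hp.1 i), minimalPeriod_le_card⟩
  calc ∑ f : Q → Q, ((numClusters f).descFactorial j : ℝ)
      = ∑ ℓ ∈ Fintype.piFinset fun _ : Fin j => Icc 1 n,
          ∑ p ∈ cyclePairsWithPeriods Q ℓ, ∏ i, (ℓ i : ℝ)⁻¹ := by
        rw [← sum_cyclePairs_prod_inv_minimalPeriod, ← sum_fiberwise_of_maps_to hmaps]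
        refine sum_congr rfl fun ℓ _ => sum_congr rfl fun p hp => ?_
        simp_rw [(mem_cyclePairsWithPeriods.1 hp).2]
    _ ≤ ∑ ℓ ∈ Fintype.piFinset fun _ : Fin j => Icc 1 n,
          (n : ℝ) ^ n * ∏ i, (ℓ i : ℝ)⁻¹ := by
        gcongr with ℓ
        rw [sum_const, nsmul_eq_mul]
        gcongr
        exact_mod_cast card_cyclePairsWithPeriods_le
    _ = (n : ℝ) ^ n * (harmonic n : ℝ) ^ j := by
        rw [← mul_sum, ← prod_univ_sum (fun _ : Fin j => Icc 1 n) fun _ ℓ => (ℓ : ℝ)⁻¹]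
        simp [harmonic_eq_sum_Icc]

theorem sum_one_add_pow_numClusters_le {t : ℝ} (ht : 0 ≤ t) :
    ∑ f : Q → Q, (1 + t) ^ numClusters f ≤
      (Fintype.card Q : ℝ) ^ Fintype.card Q * exp (t * harmonic (Fintype.card Q)) := by
  set n := Fintype.card Q
  have hH : (0 : ℝ) ≤ harmonic n := Rat.cast_nonneg.2 (by rw [harmonic_eq_sum_Icc]; positivity)
  calc ∑ f : Q → Q, (1 + t) ^ numClusters f
      = ∑ k ∈ range (n + 1), t ^ k / k.factorial *
          ∑ f : Q → Q, ((numClusters f).descFactorial k : ℝ) := by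
        simp_rw [one_add_pow_eq_sum_descFactorial (numClusters_le_card _) t]
        rw [sum_comm]
        refine sum_congr rfl fun k _ => ?_
        rw [mul_sum]
        exact sum_congr rfl fun f _ => by ring
    _ ≤ ∑ k ∈ range (n + 1),
          t ^ k / k.factorial * ((n : ℝ) ^ n * (harmonic n : ℝ) ^ k) := by
        gcongr with k
        exact sum_descFactorial_numClusters_le Q k
    _ = (n : ℝ) ^ n * ∑ k ∈ range (n + 1), (t * harmonic n) ^ k / k.factorial := by
        rw [mul_sum]
        exact sum_congr rfl fun k _ => by ring
    _ ≤ (n : ℝ) ^ n * exp (t * harmonic n) := by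
        gcongr
        exact sum_le_exp_of_nonneg (by positivity) _

end Moments

theorem probOf_lt_numClusters_le (Q : Type) [Fintype Q] [DecidableEq Q] {t : ℝ} (ht : 0 ≤ t)
    (s : ℝ) :
    probOf (Q → Q) (fun f => s < numClusters f) ≤
      exp (t * harmonic (Fintype.card Q)) / (1 + t) ^ s := by
  set n := Fintype.card Q
  have hmarkov : (Nat.card {f : Q → Q // s < numClusters f} : ℝ) * (1 + t) ^ s ≤
      (n : ℝ) ^ n * exp (t * harmonic n) := by
    rw [Nat.card_eq_fintype_card, Fintype.card_subtype]
    set tail := univ.filter fun f : Q → Q => s < numClusters f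
    calc (#tail : ℝ) * (1 + t) ^ s = ∑ f ∈ tail, (1 + t) ^ s := by
          rw [sum_const, nsmul_eq_mul]
      _ ≤ ∑ f ∈ tail, (1 + t) ^ numClusters f := by
          refine sum_le_sum fun f hf => ?_
          rw [← rpow_natCast]
          exact rpow_le_rpow_of_exponent_le (by linarith) (mem_filter.1 hf).2.le
      _ ≤ ∑ f : Q → Q, (1 + t) ^ numClusters f :=
          sum_le_sum_of_subset_of_nonneg (filter_subset _ _) fun _ _ _ => by positivity
      _ ≤ (n : ℝ) ^ n * exp (t * harmonic n) := sum_one_add_pow_numClusters_le Q ht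
  have hcard : (Nat.card (Q → Q) : ℝ) = (n : ℝ) ^ n := by simp [n]
  rw [probOf, hcard,
    div_le_div_iff₀ (by exact_mod_cast Nat.pow_self_pos) (rpow_pos_of_pos (by linarith) s)]
  linarith

lemma exp_mul_harmonic_le {n : ℕ} (hn : 1 ≤ n) {t : ℝ} (ht : 0 ≤ t) :
    exp (t * harmonic n) ≤ exp t * (n : ℝ) ^ t := by
  rw [rpow_def_of_pos (by exact_mod_cast hn), ← exp_add]
  gcongr
  nlinarith [harmonic_le_one_add_log n]

lemma eight_lt_five_mul_log_five : 8 < 5 * log 5 := by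
  have h : exp 8 < 5 ^ 5 :=
    calc exp 8 = exp 1 ^ 8 := by rw [exp_one_pow]; norm_num
      _ < 2.7182818286 ^ 8 := by gcongr; exact exp_one_lt_d9
      _ < 5 ^ 5 := by norm_num
  have := log_lt_log (exp_pos 8) h
  rwa [log_exp, log_pow, Nat.cast_ofNat] at this

lemma pow_four_mul_probOf_lt_numClusters_le {n : ℕ} (hn : 1 ≤ n) :
    (n : ℝ) ^ 4 * probOf (Fin n → Fin n) (fun f => 5 * log n < numClusters f) ≤
      exp 4 * (n : ℝ) ^ (8 - 5 * log 5) := by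
  have hn0 : (0 : ℝ) < n := by exact_mod_cast hn
  have htail := probOf_lt_numClusters_le (Fin n) (t := 4) (by norm_num) (5 * log n)
  rw [Fintype.card_fin] at htail
  have hbase : (1 + 4 : ℝ) ^ (5 * log n) = (n : ℝ) ^ (5 * log 5) := by
    rw [rpow_def_of_pos (by norm_num), rpow_def_of_pos hn0]
    ring_nf
  calc (n : ℝ) ^ 4 * probOf (Fin n → Fin n) (fun f => 5 * log n < numClusters f)
      ≤ (n : ℝ) ^ 4 * (exp 4 * (n : ℝ) ^ (4 : ℝ) / (n : ℝ) ^ (5 * log 5)) := by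
        rw [← hbase]
        gcongr
        exact htail.trans (div_le_div_of_nonneg_right
          (exp_mul_harmonic_le hn (t := 4) (by norm_num)) (by positivity))
    _ = exp 4 * (n : ℝ) ^ (8 - 5 * log 5) := by
        rw [← rpow_ofNat (n : ℝ) 4, rpow_sub hn0, show (8 : ℝ) = 4 + 4 by norm_num,
          rpow_add hn0]
        ring

/-- For a uniformly random map `f : Fin n → Fin n`, the probability that the
number of cycles (clusters) of `f` exceeds `5·ln n` is `o(1/n⁴)`. -/
theorem stmt4 :
    Filter.Tendsto
      (fun n : ℕ => (n : ℝ) ^ 4 *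
        probOf (Fin n → Fin n) (fun f => 5 * Real.log n < (numClusters f : ℝ)))
      Filter.atTop (nhds 0) := by
  have hdecay : Tendsto (fun n : ℕ => exp 4 * (n : ℝ) ^ (8 - 5 * log 5)) atTop (𝓝 0) := by
    have := (tendsto_rpow_neg_atTop (sub_pos.2 eight_lt_five_mul_log_five)).comp
      tendsto_natCast_atTop_atTop
    simpa [comp_def, neg_sub] using this.const_mul (exp 4)
  refine squeeze_zero'
    (.of_forall fun n => mul_nonneg (by positivity) (by unfold probOf; positivity)) ?_ hdecay
  filter_upwards [eventually_ge_atTop 1] with n hn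
  exact pow_four_mul_probOf_lt_numClusters_le hn
end

section
/- Let A and B be two distinct F-cliques of a DFA such that A \ B = {p} and B \ A = {q} for some states p, q. Then (p, q) is a stable pair. -/
/-- Action of a word (list of letters) on a state: the empty word acts as the
identity and a word acts by composition of the letter actions. -/
def actW {Q A : Type*} (δ : A → Q → Q) (w : List A) (q : Q) : Q :=
  w.foldl (fun s x => δ x s) q

/-- A pair of distinct states is a deadlock if no word merges them. -/
def Deadlock {Q A : Type*} (δ : A → Q → Q) (p q : Q) : Prop :=
  p ≠ q ∧ ∀ w : List A, actW δ w p ≠ actW δ w q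

/-- An `F`-clique: a set all of whose pairs of distinct elements are deadlocks,
of maximal cardinality among all such sets. -/
def IsFClique {Q A : Type*} [Fintype Q] (δ : A → Q → Q) (F : Finset Q) : Prop :=
  (∀ p ∈ F, ∀ q ∈ F, p ≠ q → Deadlock δ p q) ∧
  ∀ G : Finset Q, (∀ p ∈ G, ∀ q ∈ G, p ≠ q → Deadlock δ p q) → G.card ≤ F.card

/-- A pair of states `(p,q)` is stable if for every word `u` there is a word
`v` with `p·uv = q·uv`. -/
def Stable {Q A : Type*} (δ : A → Q → Q) (p q : Q) : Prop :=
  ∀ u : List A, ∃ v : List A, actW δ (u ++ v) p = actW δ (u ++ v) q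

/-- If `A` and `B` are distinct `F`-cliques with `A \ B = {p}` and
`B \ A = {q}`, then `(p,q)` is a stable pair. -/
theorem stmt6 {Q A : Type*} [Fintype Q] [DecidableEq Q] (δ : A → Q → Q)
    (F₁ F₂ : Finset Q) (hF₁ : IsFClique δ F₁) (hF₂ : IsFClique δ F₂)
    (hne : F₁ ≠ F₂) (p q : Q)
    (hp : F₁ \ F₂ = {p}) (hq : F₂ \ F₁ = {q}) :
    Stable δ p q := by
  have happ : ∀ (u v : List A) (x : Q),
      actW δ (u ++ v) x = actW δ v (actW δ u x) := by
    intro u v x; simp [actW, List.foldl_append]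
  have dpush : ∀ (u : List A) (x y : Q), Deadlock δ x y →
      Deadlock δ (actW δ u x) (actW δ u y) := by
    intro u x y h
    refine ⟨h.2 u, fun w hw => h.2 (u ++ w) ?_⟩
    rw [happ, happ, hw]
  intro u
  by_contra hcon
  push_neg at hcon
  have hpm : p ∈ F₁ ∧ p ∉ F₂ := by
    have := hp ▸ Finset.mem_singleton_self p
    exact Finset.mem_sdiff.mp this
  have hqm : q ∈ F₂ ∧ q ∉ F₁ := by
    have := hq ▸ Finset.mem_singleton_self q
    exact Finset.mem_sdiff.mp this
  set f := actW δ u with hf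
  -- deadlock of the images of any a ∈ F₁ with q
  have key : ∀ a ∈ F₁, Deadlock δ (f a) (f q) := by
    intro a ha
    by_cases hap : a = p
    · subst hap
      refine ⟨?_, fun w hw => hcon w ?_⟩
      · have := hcon []
        simpa [happ] using this
      · rw [happ, happ]; exact hw
    · have haF₂ : a ∈ F₂ := by
        by_contra hx
        have : a ∈ F₁ \ F₂ := Finset.mem_sdiff.mpr ⟨ha, hx⟩
        rw [hp, Finset.mem_singleton] at this
        exact hap this
      have haq : a ≠ q := fun h => hqm.2 (h ▸ ha)
      exact dpush u a q (hF₂.1 a haF₂ q hqm.1 haq)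
  -- the enlarged set
  set G : Finset Q := insert (f q) (F₁.image f) with hG
  have hGdead : ∀ x ∈ G, ∀ y ∈ G, x ≠ y → Deadlock δ x y := by
    intro x hx y hy hxy
    rw [hG, Finset.mem_insert, Finset.mem_image] at hx hy
    rcases hx with hx | ⟨a, ha, rfl⟩
    · rcases hy with hy | ⟨b, hb, rfl⟩
      · exact absurd (hx.trans hy.symm) hxy
      · subst hx
        have := key b hb
        exact ⟨this.1.symm, fun w hw => this.2 w hw.symm⟩
    · rcases hy with hy | ⟨b, hb, rfl⟩
      · subst hy; exact key a ha
      · have hab : a ≠ b := fun h => hxy (by rw [h])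
        exact dpush u a b (hF₁.1 a ha b hb hab)
  have hcard : G.card = F₁.card + 1 := by
    have hinj : Set.InjOn f F₁ := by
      intro a ha b hb hfab
      by_contra hab
      exact (hF₁.1 a ha b hb hab |> dpush u a b).1 hfab
    have himg : (F₁.image f).card = F₁.card := Finset.card_image_of_injOn hinj
    have hnot : f q ∉ F₁.image f := by
      intro h
      rcases Finset.mem_image.mp h with ⟨a, ha, hfa⟩
      exact (key a ha).1 hfa
    rw [hG, Finset.card_insert_of_notMem hnot, himg]
  have := hF₁.2 G hGdead
  omega
end

section
/- For every real constant q > 1 there is a constant C such that for every n, the probability that the random 2-letter automaton (a,b) with n states has a nonempty closed set M ⊆ Fin n with |M| < n/(q·e²) is at most C/n. -/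
/-- A set of states is closed if it is stable under the action of every letter. -/
def ClosedSet {Q A : Type*} (δ : A → Q → Q) (M : Finset Q) : Prop :=
  ∀ q ∈ M, ∀ x : A, δ x q ∈ M

/-! A fixed set `M` of `m` states is closed with probability `(m/n)^(2m)`, since each of the two
letters must map `M` into itself. By the union bound, grouping the sets by size, the probability
in question is at most `∑ C(n,m) (m/n)^(2m) ≤ ∑ (e m/n)^m`, using `C(n,m) ≤ n^m/m!` and
`m^m/m! ≤ e^m`. For `m < n/(q e²)` the ratio `e m/n` is at most `r = 1/(q e) < 1`, so
`(e m/n)^m ≤ (e/(r n)) m r^m`, and `∑ m r^m = r/(1-r)²` gives the bound `e/((1-r)² n)`. -/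

open Finset Real

theorem probOf_exists_mem_le_sum {T ι : Type} [Fintype T] (s : Finset ι) (P : ι → T → Prop) :
    probOf T (fun x => ∃ i ∈ s, P i x) ≤ ∑ i ∈ s, probOf T (P i) := by
  classical
  simp only [probOf, Nat.card_eq_fintype_card, Fintype.card_subtype, ← Finset.sum_div]
  gcongr
  exact_mod_cast (card_le_card fun x hx => by simpa [mem_biUnion] using hx).trans card_biUnion_le

theorem probOf_prod_and {A B : Type} [Fintype A] [Fintype B] (P : A → Prop) (Q : B → Prop) :
    probOf (A × B) (fun x => P x.1 ∧ Q x.2) = probOf A P * probOf B Q := by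
  simp only [probOf, Nat.card_congr Equiv.subtypeProdEquivProd, Nat.card_prod]
  push_cast
  exact mul_div_mul_comm _ _ _ _

theorem card_forall_mem_mem {α : Type*} [Fintype α] (M : Finset α) :
    Nat.card {f : α → α // ∀ i ∈ M, f i ∈ M}
      = #M ^ #M * Fintype.card α ^ (Fintype.card α - #M) := by
  classical
  have h : ∀ i, Nat.card {x // i ∈ M → x ∈ M}
      = if i ∈ M then #M else Fintype.card α := by
    intro i
    split_ifs with hi <;> simp [hi, Nat.card_eq_fintype_card]
  rw [Nat.card_congr (Equiv.subtypePiEquivPi (p := fun i x => i ∈ M → x ∈ M)), Nat.card_pi]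
  simp only [h]
  rw [prod_ite, prod_const, prod_const, filter_mem_eq_inter, univ_inter,
    filter_notMem_eq_sdiff, card_univ_sdiff]

theorem probOf_forall_mem_mem {α : Type} [Fintype α] [DecidableEq α] (M : Finset α) :
    probOf (α → α) (fun f => ∀ i ∈ M, f i ∈ M) = ((#M : ℝ) / Fintype.card α) ^ #M := by
  obtain ⟨j, hj⟩ := Nat.exists_eq_add_of_le (card_le_univ M)
  rw [probOf, card_forall_mem_mem, Nat.card_fun, Nat.card_eq_fintype_card, hj,
    Nat.add_sub_cancel_left]
  rcases (#M + j).eq_zero_or_pos with h | h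
  · simp [Nat.eq_zero_of_add_eq_zero_right h]
  · have hk : ((#M : ℝ) + j) ≠ 0 := by exact_mod_cast h.ne'
    push_cast
    rw [pow_add, div_pow]
    field_simp

theorem closedSet_delta2_iff {n : ℕ} (f : (Fin n → Fin n) × (Fin n → Fin n))
    (M : Finset (Fin n)) :
    ClosedSet (delta2 f) M ↔ (∀ i ∈ M, f.1 i ∈ M) ∧ ∀ i ∈ M, f.2 i ∈ M := by
  simp only [ClosedSet, Bool.forall_bool, delta2, Bool.false_eq_true, if_false, if_true, forall_and]
  exact and_comm

theorem probOf_closedSet_delta2 (n : ℕ) (M : Finset (Fin n)) :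
    probOf _ (fun f => ClosedSet (delta2 f) M) = ((#M : ℝ) / n) ^ (2 * #M) := by
  simp only [closedSet_delta2_iff]
  rw [probOf_prod_and (fun g : Fin n → Fin n => ∀ i ∈ M, g i ∈ M)
    (fun g : Fin n → Fin n => ∀ i ∈ M, g i ∈ M), probOf_forall_mem_mem, Fintype.card_fin]
  ring

theorem sum_filter_card_eq_sum_choose {α : Type*} [Fintype α] (p : ℕ → Prop) [DecidablePred p]
    (F : ℕ → ℝ) :
    ∑ M ∈ (univ : Finset (Finset α)).filter (fun M => p #M), F #M
      = ∑ m ∈ range (Fintype.card α + 1),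
          (Fintype.card α).choose m * if p m then F m else 0 := by
  rw [sum_filter, ← powerset_univ, sum_powerset_apply_card (fun m => if p m then F m else 0),
    card_univ]
  simp only [nsmul_eq_mul]

theorem choose_mul_div_pow_le (n m : ℕ) :
    (n.choose m : ℝ) * ((m : ℝ) / n) ^ (2 * m) ≤ (exp 1 * m / n) ^ m := by
  rcases n.eq_zero_or_pos with rfl | hn
  · cases m <;> simp
  have hfact : (m : ℝ) ^ m / m.factorial ≤ exp 1 ^ m := by
    simpa [← exp_nat_mul] using pow_div_factorial_le_exp (m : ℝ) (Nat.cast_nonneg m) m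
  calc (n.choose m : ℝ) * ((m : ℝ) / n) ^ (2 * m)
      ≤ (n : ℝ) ^ m / m.factorial * ((m : ℝ) / n) ^ (2 * m) := by
        gcongr; exact Nat.choose_le_pow_div m n
    _ = (m : ℝ) ^ m / m.factorial * ((m : ℝ) / n) ^ m := by
        rw [two_mul, pow_add, div_pow]; field_simp
    _ ≤ exp 1 ^ m * ((m : ℝ) / n) ^ m := by gcongr
    _ = (exp 1 * m / n) ^ m := by rw [← mul_pow, mul_div_assoc]

theorem choose_mul_div_pow_le_geometric {n m : ℕ} {r : ℝ} (hr : 0 < r) (hm : 1 ≤ m)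
    (hmr : exp 1 * m / n ≤ r) :
    (n.choose m : ℝ) * ((m : ℝ) / n) ^ (2 * m) ≤ exp 1 / r / n * (m * r ^ m) := by
  have hx : 0 ≤ exp 1 * m / n := by positivity
  calc (n.choose m : ℝ) * ((m : ℝ) / n) ^ (2 * m)
      ≤ (exp 1 * m / n) ^ m := choose_mul_div_pow_le n m
    _ = exp 1 * m / n * (exp 1 * m / n) ^ (m - 1) := by rw [← pow_succ', Nat.sub_add_cancel hm]
    _ ≤ exp 1 * m / n * r ^ (m - 1) := by gcongr
    _ = exp 1 / r / n * (m * r ^ m) := by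
        rw [← Nat.sub_add_cancel hm, pow_succ, Nat.add_sub_cancel]
        field_simp

theorem exp_one_mul_div_le_inv {q : ℝ} (hq : 0 < q) {m n : ℕ}
    (h : (m : ℝ) < n / (q * exp 1 ^ 2)) : exp 1 * m / n ≤ (q * exp 1)⁻¹ := by
  rcases n.eq_zero_or_pos with rfl | hn
  · rw [Nat.cast_zero, div_zero]; positivity
  have hm := (lt_div_iff₀ (by positivity)).1 h
  rw [div_le_iff₀ (by exact_mod_cast hn)]
  calc exp 1 * m = (q * exp 1)⁻¹ * (m * (q * exp 1 ^ 2)) := by field_simp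
    _ ≤ (q * exp 1)⁻¹ * n := by gcongr

theorem sum_range_mul_geometric_le {r : ℝ} (hr0 : 0 ≤ r) (hr1 : r < 1) (N : ℕ) :
    ∑ m ∈ range N, m * r ^ m ≤ r / (1 - r) ^ 2 := by
  have hr : ‖r‖ < 1 := by rwa [Real.norm_of_nonneg hr0]
  rw [← tsum_coe_mul_geometric_of_norm_lt_one hr]
  refine Summable.sum_le_tsum _ (fun m _ => by positivity) ?_
  simpa using summable_pow_mul_geometric_of_norm_lt_one 1 hr

/-- For every constant `q > 1`, the probability that the random 2-letter
automaton with `n` states has a nonempty closed set of size less than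
`n/(q·e²)` is at most `C/n` for some constant `C`. -/
theorem stmt12 (q : ℝ) (hq : 1 < q) :
    ∃ C : ℝ, ∀ n : ℕ,
      probOf ((Fin n → Fin n) × (Fin n → Fin n))
          (fun f => ∃ M : Finset (Fin n), M.Nonempty ∧ ClosedSet (delta2 f) M ∧
            (M.card : ℝ) < (n : ℝ) / (q * Real.exp 1 ^ 2))
        ≤ C / n := by
  classical
  set r := (q * exp 1)⁻¹
  have hqe : 1 < q * exp 1 := one_lt_mul_of_lt_of_le hq (one_le_exp zero_le_one)
  have hr0 : 0 < r := inv_pos.2 (zero_lt_one.trans hqe)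
  refine ⟨exp 1 / (1 - r) ^ 2, fun n => ?_⟩
  set small : ℕ → Prop := fun m => 1 ≤ m ∧ (m : ℝ) < n / (q * exp 1 ^ 2)
  calc _ = probOf _ (fun f => ∃ M ∈ (univ : Finset (Finset (Fin n))).filter (fun M => small #M),
          ClosedSet (delta2 f) M) := by
        refine congrArg _ (funext fun f => propext (exists_congr fun M => ?_))
        simp only [mem_filter, mem_univ, true_and, small, one_le_card]
        tauto
    _ ≤ ∑ M ∈ univ.filter (fun M => small #M), ((#M : ℝ) / n) ^ (2 * #M) := by
        refine (probOf_exists_mem_le_sum _ (fun M f => ClosedSet (delta2 f) M)).trans_eq ?_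
        exact sum_congr rfl fun M _ => probOf_closedSet_delta2 n M
    _ = ∑ m ∈ range (n + 1), n.choose m * if small m then ((m : ℝ) / n) ^ (2 * m) else 0 := by
        simpa only [Fintype.card_fin] using sum_filter_card_eq_sum_choose (α := Fin n) small
          fun m => ((m : ℝ) / n) ^ (2 * m)
    _ ≤ ∑ m ∈ range (n + 1), exp 1 / r / n * (m * r ^ m) := by
        refine sum_le_sum fun m _ => ?_
        split_ifs with h
        · exact choose_mul_div_pow_le_geometric hr0 h.1
            (exp_one_mul_div_le_inv (zero_lt_one.trans hq) h.2)
        · simp only [mul_zero]; positivity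
    _ ≤ exp 1 / r / n * (r / (1 - r) ^ 2) := by
        rw [← mul_sum]
        gcongr
        exact sum_range_mul_geometric_le hr0.le (inv_lt_one_of_one_lt₀ hqe) _
    _ = exp 1 / (1 - r) ^ 2 / n := by
        field_simp
end

section
/- Let ⟨Q, {a,b}⟩ be a DFA with |Q| = n, let p, q, r, r' be states and k ≥ 0 an integer. If the pairs (p·a^k, r) and (q·a^k, r') are stable and r·a^n = r'·a^n, then for every h ≥ k + n the pair (p·a^h, q·a^h) is stable. -/
/-- The two letters `a`, `b` of a DFA `⟨Q, {a,b}⟩` as a transition function. -/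
def twoDelta {Q : Type*} (a b : Q → Q) : Bool → Q → Q :=
  fun x => if x then a else b

lemma actW_append {Q A : Type*} (δ : A → Q → Q) (u v : List A) (q : Q) :
    actW δ (u ++ v) q = actW δ v (actW δ u q) := by
  simp [actW, List.foldl_append]

lemma stable_symm {Q A : Type*} (δ : A → Q → Q) {p q : Q}
    (h : Stable δ p q) : Stable δ q p := fun u => by
  obtain ⟨v, hv⟩ := h u; exact ⟨v, hv.symm⟩

lemma stable_trans {Q A : Type*} (δ : A → Q → Q) {p q s : Q}
    (h1 : Stable δ p q) (h2 : Stable δ q s) : Stable δ p s := fun u => by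
  obtain ⟨v, hv⟩ := h1 u
  obtain ⟨w, hw⟩ := h2 (u ++ v)
  refine ⟨v ++ w, ?_⟩
  rw [← List.append_assoc, actW_append δ (u ++ v) w p, hv, ← actW_append]
  exact hw

lemma stable_act {Q A : Type*} (δ : A → Q → Q) {p q : Q} (w : List A)
    (h : Stable δ p q) : Stable δ (actW δ w p) (actW δ w q) := fun u => by
  obtain ⟨v, hv⟩ := h (w ++ u)
  refine ⟨v, ?_⟩
  rw [← actW_append, ← actW_append, ← List.append_assoc]
  exact hv

lemma actW_replicate {Q : Type*} (a b : Q → Q) (m : ℕ) (q : Q) :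
    actW (twoDelta a b) (List.replicate m true) q = a^[m] q := by
  induction m generalizing q with
  | zero => rfl
  | succ m ih =>
      rw [List.replicate_succ]
      simp only [actW, List.foldl_cons] at *
      rw [ih (twoDelta a b true q)]
      simp [twoDelta, Function.iterate_succ_apply]

/-- In a DFA `⟨Q,{a,b}⟩` with `n` states: if `(p·a^k, r)` and `(q·a^k, r')` are
stable and `r·a^n = r'·a^n`, then `(p·a^h, q·a^h)` is stable for every
`h ≥ k + n`. -/
theorem stmt13 {Q : Type*} [Fintype Q] (n : ℕ) (hn : Nat.card Q = n)
    (a b : Q → Q) (p q r r' : Q) (k : ℕ)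
    (h1 : Stable (twoDelta a b) (a^[k] p) r)
    (h2 : Stable (twoDelta a b) (a^[k] q) r')
    (h3 : a^[n] r = a^[n] r') :
    ∀ h : ℕ, k + n ≤ h → Stable (twoDelta a b) (a^[h] p) (a^[h] q) := by
  intro h hh
  set m := h - k with hm
  have hkm : h = m + k := by omega
  have hp : a^[h] p = actW (twoDelta a b) (List.replicate m true) (a^[k] p) := by
    rw [actW_replicate, hkm, Function.iterate_add_apply]
  have hq : a^[h] q = actW (twoDelta a b) (List.replicate m true) (a^[k] q) := by
    rw [actW_replicate, hkm, Function.iterate_add_apply]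
  have hr : a^[m] r = a^[m] r' := by
    have : m = (m - n) + n := by omega
    rw [this, Function.iterate_add_apply, Function.iterate_add_apply, h3]
  have s1 : Stable (twoDelta a b) (a^[h] p)
      (actW (twoDelta a b) (List.replicate m true) r) := by
    rw [hp]; exact stable_act _ _ h1
  have s2 : Stable (twoDelta a b) (a^[h] q)
      (actW (twoDelta a b) (List.replicate m true) r') := by
    rw [hq]; exact stable_act _ _ h2
  have e : actW (twoDelta a b) (List.replicate m true) r
      = actW (twoDelta a b) (List.replicate m true) r' := by
    rw [actW_replicate, actW_replicate, hr]
  rw [e] at s1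
  exact stable_trans _ s1 (stable_symm _ s2)
end

section
/- In any DFA, the stability relation is a congruence: the relation 'the pair (p,q) is stable' is reflexive, symmetric, and transitive on Q, and if (p,q) is stable then (p·w, q·w) is stable for every word w. -/
/-- In any DFA the stability relation is a congruence: it is reflexive,
symmetric and transitive, and it is preserved by the action of every word. -/
theorem stmt14 {Q A : Type*} (δ : A → Q → Q) :
    (∀ p : Q, Stable δ p p) ∧
    (∀ p q : Q, Stable δ p q → Stable δ q p) ∧
    (∀ p q r : Q, Stable δ p q → Stable δ q r → Stable δ p r) ∧
    (∀ (p q : Q) (w : List A), Stable δ p q →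
      Stable δ (actW δ w p) (actW δ w q)) := by
  refine ⟨fun p u => ⟨[], rfl⟩, fun p q h u => ?_, fun p q r hpq hqr u => ?_,
    fun p q w h u => ?_⟩
  · obtain ⟨v, hv⟩ := h u
    exact ⟨v, hv.symm⟩
  · obtain ⟨v, hv⟩ := hpq u
    obtain ⟨v', hv'⟩ := hqr (u ++ v)
    refine ⟨v ++ v', ?_⟩
    have h1 : actW δ (u ++ v ++ v') p = actW δ (u ++ v ++ v') q := by
      simp only [actW_append] at hv ⊢
      rw [hv]
    rw [← List.append_assoc]
    exact h1.trans hv'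
  · obtain ⟨v, hv⟩ := h (w ++ u)
    refine ⟨v, ?_⟩
    simpa [actW_append] using hv
end

section
/- If F is an F-clique of a DFA and w is any word, then the image F·w is also an F-clique; in particular |F·w| = |F|. -/
/-- The image of an `F`-clique under the action of any word is again an
`F`-clique; in particular it has the same cardinality. -/
theorem stmt16 {Q A : Type*} [Fintype Q] [DecidableEq Q] (δ : A → Q → Q)
    (F : Finset Q) (hF : IsFClique δ F) (w : List A) :
    IsFClique δ (F.image (fun q => actW δ w q)) ∧
      (F.image (fun q => actW δ w q)).card = F.card := by
  have happ : ∀ (v u : List A) (q : Q), actW δ (v ++ u) q = actW δ u (actW δ v q) := by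
    intro v u q; simp [actW, List.foldl_append]
  -- injectivity of actW δ w on F
  have hinj : ∀ p ∈ F, ∀ q ∈ F, actW δ w p = actW δ w q → p = q := by
    intro p hp q hq h
    by_contra hne
    exact (hF.1 p hp q hq hne).2 w h
  have hcard : (F.image (fun q => actW δ w q)).card = F.card :=
    Finset.card_image_of_injOn hinj
  have hclq : ∀ p ∈ F.image (fun q => actW δ w q), ∀ q ∈ F.image (fun q => actW δ w q),
      p ≠ q → Deadlock δ p q := by
    intro p hp q hq hne
    obtain ⟨p0, hp0, rfl⟩ := Finset.mem_image.mp hp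
    obtain ⟨q0, hq0, rfl⟩ := Finset.mem_image.mp hq
    have hne0 : p0 ≠ q0 := by rintro rfl; exact hne rfl
    refine ⟨hne, fun v hv => ?_⟩
    have := (hF.1 p0 hp0 q0 hq0 hne0).2 (w ++ v)
    rw [happ, happ] at this
    exact this hv
  refine ⟨⟨hclq, fun G hG => ?_⟩, hcard⟩
  rw [hcard]
  exact hF.2 G hG
end
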